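/- For g ≥ 3, the abelianization of G_E(g) is isomorphic to the cyclic group Z/(2(g−1)g) if g is odd, and to Z/((g−1)g) ⊕ Z/2 if g is even. Moreover, for g odd the abelianization is generated by the image of t_1, and for g even by the images of t_1 and ρ. -/

import Mathlib

open FreeGroup in
/-- Relations (E1)-(E5). The generator `some i` is `t_{i+1}` and `none` is `ρ`. -/
def relsE (g : ℕ) : Set (FreeGroup (Option (Fin (g-1)))) :=
  -- (E1)
  {r | ∃ j k : Fin (g-1), ((j : ℕ) + 1 < k ∨ (k : ℕ) + 1 < j) ∧
        r = of (some k) * of (some j) * (of (some j) * of (some k))⁻¹} ∪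
  -- (E2)
  {r | ∃ j k : Fin (g-1), (j : ℕ) + 1 = k ∧
        r = of (some j) * of (some k) * of (some j) *
            (of (some k) * of (some j) * of (some k))⁻¹} ∪
  -- (E3)
  {(List.ofFn (fun i : Fin (g-1) => of (some i : Option (Fin (g-1))))).prod ^ g *
      (if Odd g then (of (none : Option (Fin (g-1))))⁻¹ else 1)} ∪
  -- (E4)
  {of (none : Option (Fin (g-1))) ^ 2} ∪
  -- (E5)  ρ t_j ρ = t_j
  {r | ∃ j : Fin (g-1), r = of none * of (some j) * of none * (of (some j))⁻¹}

/-- `G_E(g)`, a presentation of the group `M^{h+}(N_g)`. -/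
def GE (g : ℕ) : Type := PresentedGroup (relsE g)

instance (g : ℕ) : Group (GE g) := by unfold GE; infer_instance

/-- The generator `t_{i+1}` of `G_E(g)`. -/
def GE.t {g : ℕ} (i : Fin (g-1)) : GE g := PresentedGroup.of (rels := relsE g) (some i)

/-- The generator `ρ` of `G_E(g)`. -/
def GE.ρ (g : ℕ) : GE g := PresentedGroup.of (rels := relsE g) none

/-! In the abelianization the braid relation (E2) identifies all `t_j` with a single class `a`,
(E3) becomes `a ^ ((g-1) g) = ρ` for odd `g` and `a ^ ((g-1) g) = 1` for even `g`, (E4) is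
`ρ² = 1`, and (E1), (E5) become trivial. Hence every element is `a ^ j * ρ ^ k`, and
`t_j ↦ 1`, `ρ ↦ (g-1) g` (odd `g`), resp. `t_j ↦ (1, 0)`, `ρ ↦ (0, 1)` (even `g`), defines a
homomorphism to the claimed group that is onto and sends `a ^ j * ρ ^ k` to zero only when
`a ^ j * ρ ^ k = 1`. -/

theorem eq_of_mul_mul_eq_mul_mul {A : Type*} [CommGroup A] {x y : A} (h : x * y * x = y * x * y) :
    x = y :=
  mul_left_cancel (a := x * y) (h.trans (by rw [mul_comm y x]))

theorem zpow_eq_one_of_pow_eq_one_of_dvd {G : Type*} [Group G] {x : G} {n : ℕ} {k : ℤ}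
    (hx : x ^ n = 1) (hk : (n : ℤ) ∣ k) : x ^ k = 1 := by
  obtain ⟨m, rfl⟩ := hk
  rw [zpow_mul, zpow_natCast, hx, one_zpow]

namespace GE

variable {g : ℕ}

theorem t_braid (j k : Fin (g-1)) (hjk : (j : ℕ) + 1 = k) :
    t j * t k * t j = t k * t j * t k := by
  have h := PresentedGroup.mk_eq_mk_of_mul_inv_mem (rels := relsE g)
    (Or.inl (Or.inl (Or.inl (Or.inr ⟨j, k, hjk, rfl⟩))))
  simp only [map_mul] at h
  exact h

theorem prod_t_pow : (List.ofFn (t (g := g))).prod ^ g = if Odd g then ρ g else 1 := by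
  have h := PresentedGroup.one_of_mem (rels := relsE g) (Or.inl (Or.inl (Or.inr rfl)))
  simp only [map_mul, map_pow, map_list_prod, List.map_ofFn] at h
  split_ifs at h ⊢
  · rw [map_inv, mul_inv_eq_one] at h
    exact h
  · rw [map_one, mul_one] at h
    exact h

theorem ρ_sq : ρ g ^ 2 = 1 := by
  have h := PresentedGroup.one_of_mem (rels := relsE g) (Or.inl (Or.inr rfl))
  rw [map_pow] at h
  exact h

theorem of_t_eq_of_t_succ (j k : Fin (g-1)) (hjk : (j : ℕ) + 1 = k) :
    Abelianization.of (t j) = Abelianization.of (t k) :=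
  eq_of_mul_mul_eq_mul_mul <| by
    simpa only [map_mul] using congrArg Abelianization.of (t_braid j k hjk)

theorem of_t_eq_of_t_zero :
    ∀ i : Fin (g-1), Abelianization.of (t i) = Abelianization.of (t ⟨0, i.pos⟩)
  | ⟨0, _⟩ => rfl
  | ⟨k + 1, hk⟩ =>
    (of_t_eq_of_t_succ ⟨k, by omega⟩ _ rfl).symm.trans (of_t_eq_of_t_zero ⟨k, by omega⟩)

theorem of_t_eq (i j : Fin (g-1)) : Abelianization.of (t i) = Abelianization.of (t j) :=
  (of_t_eq_of_t_zero i).trans (of_t_eq_of_t_zero j).symm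

theorem of_t_pow (i : Fin (g-1)) :
    Abelianization.of (t i) ^ ((g-1) * g) = if Odd g then Abelianization.of (ρ g) else 1 := by
  have h := congrArg Abelianization.of (prod_t_pow (g := g))
  rw [map_pow, map_list_prod, List.map_ofFn, Function.comp_def] at h
  simp only [of_t_eq _ i, List.ofFn_const, List.prod_replicate, ← pow_mul] at h
  rw [h]
  split_ifs <;> rfl

theorem of_ρ_sq : Abelianization.of (ρ g) ^ 2 = 1 := by
  rw [← map_pow, ρ_sq, map_one]

theorem closure_of_t_of_ρ (i : Fin (g-1)) :
    Subgroup.closure {Abelianization.of (t i), Abelianization.of (ρ g)} = ⊤ := by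
  refine eq_top_iff.2 fun x _ => ?_
  obtain ⟨y, rfl⟩ := QuotientGroup.mk_surjective x
  refine PresentedGroup.generated_by _ ((Subgroup.closure _).comap Abelianization.of)
    (fun o => ?_) y
  rcases o with _ | j
  · exact Subgroup.subset_closure (Or.inr rfl)
  · exact Subgroup.subset_closure (Or.inl (of_t_eq j i))

section Lift

variable {A : Type*} [CommGroup A] {x r : A}

theorem lift_eq_one_of_mem_relsE (hr : r ^ 2 = 1)
    (hx : x ^ ((g-1) * g) = if Odd g then r else 1) :
    ∀ w ∈ relsE g, FreeGroup.lift (fun o => o.elim r fun _ => x) w = 1 := by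
  rintro w ((((⟨j, k, -, rfl⟩ | ⟨j, k, -, rfl⟩) | rfl) | rfl) | ⟨j, rfl⟩)
  · simp
  · simp
  · rw [map_mul, map_pow, map_list_prod, List.map_ofFn]
    simp only [Function.comp_def, FreeGroup.lift_apply_of, Option.elim_some, List.ofFn_const,
      List.prod_replicate, ← pow_mul, hx]
    split_ifs <;> simp
  · simpa using hr
  · simp [mul_assoc, ← pow_two, hr]

def abLift (x r : A) (hr : r ^ 2 = 1) (hx : x ^ ((g-1) * g) = if Odd g then r else 1) :
    Abelianization (GE g) →* A :=
  Abelianization.lift (PresentedGroup.toGroup (lift_eq_one_of_mem_relsE hr hx))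

variable (hr : r ^ 2 = 1) (hx : x ^ ((g-1) * g) = if Odd g then r else 1)

@[simp]
theorem abLift_of_t (i : Fin (g-1)) : abLift x r hr hx (Abelianization.of (t i)) = x :=
  PresentedGroup.toGroup.of (lift_eq_one_of_mem_relsE hr hx)

@[simp]
theorem abLift_of_ρ : abLift x r hr hx (Abelianization.of (ρ g)) = r :=
  PresentedGroup.toGroup.of (lift_eq_one_of_mem_relsE hr hx)

end Lift

def abToZMod (hodd : Odd g) :
    Abelianization (GE g) →* Multiplicative (ZMod (2 * ((g-1) * g))) :=
  abLift (.ofAdd 1) (.ofAdd 1 ^ ((g-1) * g))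
    (by rw [← pow_mul, ← ofAdd_nsmul, mul_comm, nsmul_one, ZMod.natCast_self, ofAdd_zero])
    (if_pos hodd).symm

theorem closure_of_t_eq_top_of_odd (hodd : Odd g) (i : Fin (g-1)) :
    Subgroup.closure {Abelianization.of (t i)} = ⊤ := by
  rw [eq_top_iff, ← closure_of_t_of_ρ i, Subgroup.closure_le, Set.insert_subset_iff,
    Set.singleton_subset_iff, SetLike.mem_coe, SetLike.mem_coe, Subgroup.mem_closure_singleton,
    Subgroup.mem_closure_singleton]
  exact ⟨⟨1, zpow_one _⟩, ((g-1) * g : ℕ), by rw [zpow_natCast, of_t_pow, if_pos hodd]⟩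

theorem abToZMod_bijective (hodd : Odd g) (hg : 2 ≤ g) : Function.Bijective (abToZMod hodd) := by
  set a := Abelianization.of (t (⟨0, by omega⟩ : Fin (g-1)))
  have ha : a ^ (2 * ((g-1) * g)) = 1 := by
    rw [mul_comm, pow_mul, of_t_pow, if_pos hodd, of_ρ_sq]
  have hφ (k : ℤ) : abToZMod hodd (a ^ k) = .ofAdd (k : ZMod (2 * ((g-1) * g))) := by
    simp [a, abToZMod, ← ofAdd_zsmul]
  refine ⟨(injective_iff_map_eq_one _).2 fun y hy => ?_, fun z => ?_⟩
  · obtain ⟨k, rfl⟩ := Subgroup.mem_closure_singleton.1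
      (closure_of_t_eq_top_of_odd hodd _ ▸ Subgroup.mem_top y : y ∈ Subgroup.closure {a})
    rw [hφ, ofAdd_eq_one, ZMod.intCast_zmod_eq_zero_iff_dvd] at hy
    exact zpow_eq_one_of_pow_eq_one_of_dvd ha hy
  · obtain ⟨k, hk⟩ := ZMod.intCast_surjective z.toAdd
    exact ⟨a ^ k, by rw [hφ, hk, ofAdd_toAdd]⟩

def abToZModProd (heven : Even g) :
    Abelianization (GE g) →* Multiplicative (ZMod ((g-1) * g) × ZMod 2) :=
  abLift (.ofAdd (1, 0)) (.ofAdd (0, 1))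
    (by rw [← ofAdd_nsmul, ofAdd_eq_one, Prod.smul_mk, nsmul_zero, nsmul_one]; rfl)
    (by rw [if_neg (Nat.not_odd_iff_even.2 heven), ← ofAdd_nsmul, ofAdd_eq_one, Prod.smul_mk,
      nsmul_zero, nsmul_one, ZMod.natCast_self]; rfl)

theorem abToZModProd_bijective (heven : Even g) (hg : 2 ≤ g) :
    Function.Bijective (abToZModProd heven) := by
  set a := Abelianization.of (t (⟨0, by omega⟩ : Fin (g-1)))
  set b := Abelianization.of (ρ g)
  have ha : a ^ ((g-1) * g) = 1 := by rw [of_t_pow, if_neg (Nat.not_odd_iff_even.2 heven)]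
  have hφ (j k : ℤ) : abToZModProd heven (a ^ j * b ^ k) =
      .ofAdd ((j : ZMod ((g-1) * g)), (k : ZMod 2)) := by
    simp [a, b, abToZModProd, ← ofAdd_zsmul, ← ofAdd_add]
  refine ⟨(injective_iff_map_eq_one _).2 fun y hy => ?_, fun z => ?_⟩
  · obtain ⟨j, k, rfl⟩ := Subgroup.mem_closure_pair.1
      (closure_of_t_of_ρ _ ▸ Subgroup.mem_top y : y ∈ Subgroup.closure {a, b})
    rw [hφ, ofAdd_eq_one, Prod.mk_eq_zero, ZMod.intCast_zmod_eq_zero_iff_dvd,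
      ZMod.intCast_zmod_eq_zero_iff_dvd] at hy
    rw [zpow_eq_one_of_pow_eq_one_of_dvd ha hy.1, zpow_eq_one_of_pow_eq_one_of_dvd of_ρ_sq hy.2,
      mul_one]
  · obtain ⟨j, hj⟩ := ZMod.intCast_surjective z.toAdd.1
    obtain ⟨k, hk⟩ := ZMod.intCast_surjective z.toAdd.2
    exact ⟨a ^ j * b ^ k, by rw [hφ, hj, hk, Prod.mk.eta, ofAdd_toAdd]⟩

end GE

/-- `H_1(M^{h+}(N_g)) = ℤ/(2(g-1)g)` for `g` odd, generated by the image of `t_1`, and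
`ℤ/((g-1)g) ⊕ ℤ/2` for `g` even, generated by the images of `t_1` and `ρ`. -/
theorem stmt4 (g : ℕ) (hg : 3 ≤ g) :
    (Odd g →
      Nonempty (Abelianization (GE g) ≃* Multiplicative (ZMod (2 * ((g-1) * g)))) ∧
      Subgroup.closure {Abelianization.of (GE.t (⟨0, by omega⟩ : Fin (g-1)))} = ⊤) ∧
    (Even g →
      Nonempty (Abelianization (GE g) ≃* Multiplicative (ZMod ((g-1) * g) × ZMod 2)) ∧
      Subgroup.closure
        {Abelianization.of (GE.t (⟨0, by omega⟩ : Fin (g-1))),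
         Abelianization.of (GE.ρ g)} = ⊤) :=
  ⟨fun hodd => ⟨⟨.ofBijective _ (GE.abToZMod_bijective hodd (by omega))⟩,
      GE.closure_of_t_eq_top_of_odd hodd _⟩,
    fun heven => ⟨⟨.ofBijective _ (GE.abToZModProd_bijective heven (by omega))⟩,
      GE.closure_of_t_of_ρ _⟩⟩
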